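/- arXiv:2104.12692 — 6 statements merged into one kernel-verified Lean document; each statement's English description precedes it below -/
import Mathlib

section
/- If a join semilattice S contains a semi-strong sub join-semilattice isomorphic to M_2, then S is not o-modular. -/
variable {α : Type*}

/-- The set of common lower bounds of `a` and `b` within `X`. -/
def L2 [Preorder α] (X : Set α) (a b : α) : Set α := {x ∈ X | x ≤ a ∧ x ≤ b}

/-- `T` is a sub join-semilattice: a subset closed under join. -/
def IsSubJoinSemilattice [SemilatticeSup α] (T : Set α) : Prop :=
  ∀ a ∈ T, ∀ b ∈ T, a ⊔ b ∈ T

/-- `T` is semi-strong in `S`. -/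
def SemiStrong [SemilatticeSup α] (T : Set α) : Prop :=
  ∀ a ∈ T, ∀ b ∈ T, L2 T a b = ∅ → L2 Set.univ a b = ∅

/-- `T` is strong in `S`. -/
def Strong [SemilatticeSup α] (T : Set α) : Prop :=
  ∀ a ∈ T, ∀ b ∈ T, L2 Set.univ a b ⊆ L2 T a b

/-- o-modularity of a join semilattice. -/
def OModular (α : Type*) [SemilatticeSup α] : Prop :=
  ∀ a b c : α, c ≤ a →
    lowerBounds {a, b ⊔ c} ⊆ lowerBounds (upperBounds (lowerBounds {a, b} ∪ {c}))

/-- `T` is (the underlying set of) a copy of `M₂`, the pentagon minus its bottom. -/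
def IsM2 [SemilatticeSup α] (T : Set α) : Prop :=
  ∃ a u b t : α, T = {a, u, b, t} ∧ a < u ∧ u < t ∧ b < t ∧
    ¬ a ≤ b ∧ ¬ b ≤ a ∧ ¬ u ≤ b ∧ ¬ b ≤ u ∧ a ⊔ b = t ∧ u ⊔ b = t

/-- `T` is (the underlying set of) a copy of `M₄`, the pentagon. -/
def IsM4 [SemilatticeSup α] (T : Set α) : Prop :=
  ∃ v a u b t : α, T = {v, a, u, b, t} ∧ v < a ∧ a < u ∧ u < t ∧ v < b ∧ b < t ∧
    ¬ a ≤ b ∧ ¬ b ≤ a ∧ ¬ u ≤ b ∧ ¬ b ≤ u ∧ a ⊔ b = t ∧ u ⊔ b = t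

/-!
Proof idea: in a copy `{a, u, b, t}` of `M₂` the elements `u` and `b` have no common lower
bound inside the copy, hence, by semi-strongness, none in `S`. Applying o-modularity to
`c := a ≤ u` and `b` then gives `u ∈ L(u, b ∨ a) = L(u, t)` but
`L U (L(u, b) ∪ {a}) = L U {a} = ↓a`, which does not contain `u > a`.
-/

theorem L2_univ_eq_lowerBounds [Preorder α] (a b : α) :
    L2 Set.univ a b = lowerBounds {a, b} := by
  ext x
  simp [L2, lowerBounds_insert]

theorem not_oModular_of_lowerBounds_pair_eq_empty [SemilatticeSup α] {a b c : α}
    (hca : c < a) (hab : lowerBounds {a, b} = ∅) (hbc : a ≤ b ⊔ c) : ¬ OModular α := by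
  intro hOM
  have ha_mem : a ∈ lowerBounds {a, b ⊔ c} := by
    simp [lowerBounds_insert, hbc]
  have hc_upper : c ∈ upperBounds (lowerBounds {a, b} ∪ {c}) := by
    simp [hab]
  exact hca.not_ge (hOM a b c hca.le ha_mem hc_upper)

theorem SemiStrong.lowerBounds_pair_eq_empty [SemilatticeSup α] {T : Set α}
    (hss : SemiStrong T) {a b : α} (ha : a ∈ T) (hb : b ∈ T) (hT : L2 T a b = ∅) :
    lowerBounds {a, b} = ∅ := by
  rw [← L2_univ_eq_lowerBounds]
  exact hss a ha b hb hT

theorem L2_M2_eq_empty [Preorder α] {a u b t : α} (hbt : b < t) (hab : ¬ a ≤ b)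
    (hub : ¬ u ≤ b) (hbu : ¬ b ≤ u) : L2 {a, u, b, t} u b = ∅ := by
  refine Set.eq_empty_of_forall_notMem fun x ⟨hx, hxu, hxb⟩ => ?_
  rcases hx with rfl | rfl | rfl | rfl
  · exact hab hxb
  · exact hub hxb
  · exact hbu hxu
  · exact hbu (hbt.le.trans hxu)

theorem semiStrong_M2_not_oModular_general [SemilatticeSup α] (T : Set α)
    (hss : SemiStrong T) (hM2 : IsM2 T) :
    ¬ OModular α := by
  obtain ⟨a, u, b, t, rfl, hau, hut, hbt, hab, -, hub, hbu, hsab, -⟩ := hM2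
  have hlb : lowerBounds {u, b} = ∅ :=
    hss.lowerBounds_pair_eq_empty (by simp) (by simp) (L2_M2_eq_empty hbt hab hub hbu)
  refine not_oModular_of_lowerBounds_pair_eq_empty hau hlb ?_
  rw [sup_comm, hsab]
  exact hut.le

theorem semiStrong_M2_not_oModular [SemilatticeSup α] (T : Set α)
    (hT : IsSubJoinSemilattice T) (hss : SemiStrong T) (hM2 : IsM2 T) :
    ¬ OModular α :=
  semiStrong_M2_not_oModular_general T hss hM2
end

section
/- If a join semilattice S contains a strong sub join-semilattice isomorphic to M_4, then S is not o-modular. -/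
/-!
In the pentagon `v < a < u < t`, `v < b < t`, apply o-modularity to `u`, `b` and `c := a`:
`u` is a lower bound of `{u, b ⊔ a} = {u, t}`, while strongness makes `v` the only common lower
bound of `u` and `b` in the whole semilattice, so `a` is an upper bound of `L(u, b) ∪ {a}`.
Hence `u ≤ a`, contradicting `a < u`.
-/

variable {α : Type*}

section

variable [SemilatticeSup α]

theorem OModular.eq_of_le_sup (hom : OModular α) {a b c : α} (hca : c ≤ a) (ha : a ≤ b ⊔ c)
    (hlow : ∀ x, x ≤ a → x ≤ b → x ≤ c) : a = c := by
  have ha_low : a ∈ lowerBounds {a, b ⊔ c} := by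
    rintro y (rfl | rfl)
    exacts [le_rfl, ha]
  have hc_up : c ∈ upperBounds (lowerBounds {a, b} ∪ {c}) := by
    rintro x (hx | rfl)
    exacts [hlow x (hx (by simp)) (hx (by simp)), le_rfl]
  exact le_antisymm (hom a b c hca ha_low hc_up) hca

theorem Strong.mem_of_le_of_le {T : Set α} (hs : Strong T) {a b x : α} (ha : a ∈ T) (hb : b ∈ T)
    (hxa : x ≤ a) (hxb : x ≤ b) : x ∈ T :=
  (hs a ha b hb ⟨trivial, hxa, hxb⟩).1

end

theorem strong_M4_not_oModular_general [SemilatticeSup α] (T : Set α)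
    (hs : Strong T) (hM4 : IsM4 T) :
    ¬ OModular α := by
  obtain ⟨v, a, u, b, t, rfl, hva, hau, hut, -, -, hab, -, hub, hbu, habt, -⟩ := hM4
  intro hom
  have hlow : ∀ x, x ≤ u → x ≤ b → x ≤ a := by
    intro x hxu hxb
    rcases hs.mem_of_le_of_le (by simp) (by simp) hxu hxb with rfl | rfl | rfl | rfl | rfl
    · exact hva.le
    · exact absurd hxb hab
    · exact absurd hxb hub
    · exact absurd hxu hbu
    · exact absurd hxu hut.not_ge
  have hu_le : u ≤ b ⊔ a := by rw [sup_comm, habt]; exact hut.le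
  exact hau.ne' (hom.eq_of_le_sup hau.le hu_le hlow)

theorem strong_M4_not_oModular [SemilatticeSup α] (T : Set α)
    (hT : IsSubJoinSemilattice T) (hs : Strong T) (hM4 : IsM4 T) :
    ¬ OModular α :=
  strong_M4_not_oModular_general T hs hM4
end

section
/- Let S be a join semilattice and a, b, c, x, y ∈ S satisfy: a < c, x ≤ c, x ≤ a ∨ b, for all z (z ≤ b and z ≤ c imply z ≤ y), a ≤ y, and x ≰ y. Then the set T = {a, b, a ∨ x, a ∨ b} is a sub join-semilattice of S with a < a∨x < a∨b, b < a∨b, a ∥ b, and a∨x ∥ b (i.e., T is isomorphic to M_2). -/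
variable {α : Type*}

section M2

variable [SemilatticeSup α] {a b u : α}

theorem sup_right_eq_sup_of_le_of_le_sup (hau : a ≤ u) (hu : u ≤ a ⊔ b) : u ⊔ b = a ⊔ b :=
  le_antisymm (sup_le hu le_sup_right) (sup_le_sup_right hau b)

theorem isSubJoinSemilattice_of_le_of_le_sup (hau : a ≤ u) (hu : u ≤ a ⊔ b) :
    IsSubJoinSemilattice ({a, b, u, a ⊔ b} : Set α) := by
  have hub : u ⊔ b = a ⊔ b := sup_right_eq_sup_of_le_of_le_sup hau hu
  have hbu : b ⊔ u = a ⊔ b := sup_comm b u ▸ hub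
  intro p hp q hq
  simp only [Set.mem_insert_iff, Set.mem_singleton_iff] at hp hq ⊢
  rcases hp with rfl | rfl | rfl | rfl <;> rcases hq with rfl | rfl | rfl | rfl <;>
    simp [sup_comm, hub, sup_of_le_left, sup_of_le_right, hau, hu, hbu]

theorem isM2_of_lt_of_lt (hau : a < u) (hu : u < a ⊔ b) (hab : ¬ a ≤ b) (hba : ¬ b ≤ a)
    (hbu : ¬ b ≤ u) : IsM2 ({a, b, u, a ⊔ b} : Set α) :=
  ⟨a, u, b, a ⊔ b, congrArg (insert a) (Set.insert_comm b u _), hau, hu, right_lt_sup.2 hab,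
    hab, hba, fun h => hab (hau.le.trans h), hbu, rfl, sup_right_eq_sup_of_le_of_le_sup hau.le hu.le⟩

end M2

theorem witnesses_give_M2 [SemilatticeSup α] (a b c x y : α)
    (h1 : a < c) (h2 : x ≤ c) (h3 : x ≤ a ⊔ b)
    (h4 : ∀ z, z ≤ b → z ≤ c → z ≤ y) (h5 : a ≤ y) (h6 : ¬ x ≤ y) :
    IsSubJoinSemilattice ({a, b, a ⊔ x, a ⊔ b} : Set α) ∧
      a < a ⊔ x ∧ a ⊔ x < a ⊔ b ∧ b < a ⊔ b ∧
      (¬ a ≤ b ∧ ¬ b ≤ a) ∧ (¬ a ⊔ x ≤ b ∧ ¬ b ≤ a ⊔ x) ∧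
      IsM2 ({a, b, a ⊔ x, a ⊔ b} : Set α) := by
  -- The incomparabilities of `b` with `a` and `a ⊔ x` all reduce to `¬ b ≤ c`.
  have hbc : ¬ b ≤ c := fun h => h6 (h3.trans (sup_le h5 (h4 b le_rfl h)))
  have hab : ¬ a ≤ b := fun h => h6 (h4 x (h3.trans (sup_le h le_rfl)) h2)
  have hba : ¬ b ≤ a := fun h => hbc (h.trans h1.le)
  have hbax : ¬ b ≤ a ⊔ x := fun h => hbc (h.trans (sup_le h1.le h2))
  have hax : a < a ⊔ x := left_lt_sup.2 fun h => h6 (h.trans h5)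
  have haxab : a ⊔ x < a ⊔ b :=
    lt_of_le_of_ne (sup_le le_sup_left h3) fun h => hbax (h ▸ le_sup_right)
  exact ⟨isSubJoinSemilattice_of_le_of_le_sup hax.le haxab.le, hax, haxab, right_lt_sup.2 hab,
    ⟨hab, hba⟩, ⟨fun h => hab (le_sup_left.trans h), hbax⟩,
    isM2_of_lt_of_lt hax haxab hab hba hbax⟩
end

section
/- If a join semilattice S is not o-modular and there exist a,b,c,x,y witnessing the failure (a < c, x ≤ c, x ≤ a∨b, every common lower bound of b and c is ≤ y, a ≤ y, x ≰ y) with L_S(b,c) = ∅, then S contains a semi-strong sub join-semilattice isomorphic to M_2. -/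
variable {α : Type*}

/- The witnesses give a copy `{a, a ⊔ x, b, a ⊔ b}` of `M₂`: `x ≰ a` makes `a < a ⊔ x`, and
`a ⊔ x ≤ c` together with `L(b, c) = ∅` keeps `a ⊔ x` and `b` without common lower bound in `S`,
which forces all the remaining incomparabilities. In a copy of `M₂` only the pairs `{a, b}` and
`{a ⊔ x, b}` lack a common lower bound inside the copy, and both lie below `{a ⊔ x, b}`, so they
have none in `S` either: the copy is semi-strong. -/

open Set

section L2

variable [Preorder α] {X : Set α} {p q r : α}

theorem L2_comm (X : Set α) (p q : α) : L2 X p q = L2 X q p :=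
  Set.ext fun _ => and_congr_right fun _ => and_comm

theorem L2_mono_left (h : p ≤ r) : L2 X p q ⊆ L2 X r q :=
  fun _ ⟨hz, hzp, hzq⟩ => ⟨hz, hzp.trans h, hzq⟩

theorem L2_eq_empty_of_le_left (hr : L2 X r q = ∅) (h : p ≤ r) : L2 X p q = ∅ :=
  subset_eq_empty (L2_mono_left h) hr

theorem L2_ne_empty {w : α} (hw : w ∈ X) (hp : w ≤ p) (hq : w ≤ q) : L2 X p q ≠ ∅ :=
  nonempty_iff_ne_empty.mp ⟨w, hw, hp, hq⟩

theorem not_le_of_L2_univ_eq_empty (h : L2 univ p q = ∅) : ¬ p ≤ q := fun hpq =>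
  L2_ne_empty (mem_univ p) le_rfl hpq h

end L2

section SemilatticeSup

variable [SemilatticeSup α]

theorem IsM2.isSubJoinSemilattice {T : Set α} (hT : IsM2 T) : IsSubJoinSemilattice T := by
  obtain ⟨a, u, b, t, rfl, hau, hut, hbt, -, -, -, -, hab, hub⟩ := hT
  have hat : a ≤ t := hau.le.trans hut.le
  intro p hp q hq
  simp only [mem_insert_iff, mem_singleton_iff] at hp hq
  rcases hp with hp | hp | hp | hp <;> rcases hq with hq | hq | hq | hq <;> subst p q <;>
    simp [hau.le, hut.le, hbt.le, hat, hab, hub, sup_comm b]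

theorem semiStrong_of_L2_univ_eq_empty {T : Set α} {a u b : α} (ha : a ∈ T) (hb : b ∈ T)
    (hT_a : ∀ p ∈ T, a ≤ p ∨ p = b) (hT_b : ∀ p ∈ T, b ≤ p ∨ p ≤ u)
    (hub : L2 univ u b = ∅) : SemiStrong T := by
  have with_b : ∀ p ∈ T, L2 T p b = ∅ → L2 univ p b = ∅ := by
    intro p hp hpb
    rcases hT_b p hp with hbp | hpu
    · exact absurd hpb (L2_ne_empty hb hbp le_rfl)
    · exact L2_eq_empty_of_le_left hub hpu
  intro p hp q hq hpq
  rcases hT_a p hp, hT_a q hq with ⟨hap | hpb, haq | hqb⟩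
  · exact absurd hpq (L2_ne_empty ha hap haq)
  · subst hqb
    exact with_b p hp hpq
  · subst hpb
    rw [L2_comm] at hpq ⊢
    exact with_b q hq hpq
  · subst hqb
    exact with_b p hp hpq

theorem semiStrong_insert_insert_insert_singleton {a u b t : α} (hau : a ≤ u) (hut : u ≤ t)
    (hbt : b ≤ t) (hub : L2 univ u b = ∅) : SemiStrong ({a, u, b, t} : Set α) := by
  refine semiStrong_of_L2_univ_eq_empty (a := a) (b := b) (by simp) (by simp) ?_ ?_ hub
  · rintro p (rfl | rfl | rfl | rfl) <;> simp [hau, hau.trans hut]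
  · rintro p (rfl | rfl | rfl | rfl) <;> simp [hau, hbt]

theorem isM2_of_not_le {a b x : α} (hxa : ¬ x ≤ a) (hx : x ≤ a ⊔ b)
    (hub : L2 univ (a ⊔ x) b = ∅) : IsM2 ({a, a ⊔ x, b, a ⊔ b} : Set α) := by
  have hbu : L2 univ b (a ⊔ x) = ∅ := L2_comm univ (a ⊔ x) b ▸ hub
  have hab : L2 univ a b = ∅ := L2_eq_empty_of_le_left hub le_sup_left
  have hba : L2 univ b a = ∅ := L2_comm univ a b ▸ hab
  have hut : a ⊔ x ≤ a ⊔ b := sup_le le_sup_left hx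
  refine ⟨a, a ⊔ x, b, a ⊔ b, rfl, left_lt_sup.mpr hxa, ?_, ?_, not_le_of_L2_univ_eq_empty hab,
    not_le_of_L2_univ_eq_empty hba, not_le_of_L2_univ_eq_empty hub,
    not_le_of_L2_univ_eq_empty hbu, rfl, ?_⟩
  · exact hut.lt_of_not_ge fun h => not_le_of_L2_univ_eq_empty hbu (le_sup_right.trans h)
  · exact right_lt_sup.mpr (not_le_of_L2_univ_eq_empty hab)
  · exact le_antisymm (sup_le hut le_sup_right) (sup_le_sup_right le_sup_left b)

end SemilatticeSup

theorem not_oModular_empty_lb_semiStrong_M2_general [SemilatticeSup α]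
    (a b c x y : α)
    (h1 : a < c) (h2 : x ≤ c) (h3 : x ≤ a ⊔ b)
    (h5 : a ≤ y) (h6 : ¬ x ≤ y)
    (hL : L2 Set.univ b c = ∅) :
    ∃ T : Set α, IsSubJoinSemilattice T ∧ SemiStrong T ∧ IsM2 T := by
  have hxa : ¬ x ≤ a := fun hxa => h6 (hxa.trans h5)
  have hub : L2 univ (a ⊔ x) b = ∅ :=
    L2_eq_empty_of_le_left (L2_comm univ b c ▸ hL) (sup_le h1.le h2)
  have hM2 := isM2_of_not_le hxa h3 hub
  exact ⟨_, hM2.isSubJoinSemilattice,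
    semiStrong_insert_insert_insert_singleton le_sup_left (sup_le le_sup_left h3) le_sup_right hub,
    hM2⟩

theorem not_oModular_empty_lb_semiStrong_M2 [SemilatticeSup α]
    (h : ¬ OModular α) (a b c x y : α)
    (h1 : a < c) (h2 : x ≤ c) (h3 : x ≤ a ⊔ b)
    (h4 : ∀ z, z ≤ b → z ≤ c → z ≤ y) (h5 : a ≤ y) (h6 : ¬ x ≤ y)
    (hL : L2 Set.univ b c = ∅) :
    ∃ T : Set α, IsSubJoinSemilattice T ∧ SemiStrong T ∧ IsM2 T :=
  not_oModular_empty_lb_semiStrong_M2_general a b c x y h1 h2 h3 h5 h6 hL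
end

section
/- Let S be a join semilattice with a, b, c, x, y ∈ S satisfying a < c, x ≤ c, x ≤ a∨b, every common lower bound of b and c is ≤ y, a ≤ y, and x ≰ y. If v ∈ S satisfies v ≤ b and v ≤ c, then v < a∨v < x∨a∨v < a∨b, v < b < a∨b, a∨v ∥ b, and x∨a∨v ∥ b; hence {v, a∨v, x∨a∨v, b, a∨b} is a sub join-semilattice of S isomorphic to the pentagon M_4. -/
/-!
Each way the five elements could fail to form a pentagon forces `x ≤ y`. Since `v ≤ b, c`,
hypothesis `h4` gives `v ≤ y` and hence `a ⊔ v ≤ y`, so `x ≰ a ⊔ v`. If `a ≤ b`, then `x ≤ b`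
and `x ≤ c`, so `x ≤ y`. If `b ≤ c`, then `b ≤ y`, so `x ≤ a ⊔ b ≤ y`; since
`x ⊔ a ⊔ v ≤ c`, this shows `b ≰ x ⊔ a ⊔ v`. With `p = a ⊔ v` and `u = x ⊔ a ⊔ v`, the chain
`v ≤ p < u ≤ p ⊔ b = a ⊔ b` together with `p ≰ b` and `b ≰ u` already determines the pentagon.
-/

variable {α : Type*}

theorem IsSubJoinSemilattice.of_le_or_le_or_sup_mem [SemilatticeSup α] {T : Set α}
    (h : ∀ a ∈ T, ∀ b ∈ T, a ≤ b ∨ b ≤ a ∨ a ⊔ b ∈ T) : IsSubJoinSemilattice T := by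
  intro a ha b hb
  rcases h a ha b hb with hab | hba | hmem
  · rwa [sup_eq_right.2 hab]
  · rwa [sup_eq_left.2 hba]
  · exact hmem

section Pentagon

variable [SemilatticeSup α] {v p u b : α}

theorem sup_eq_sup_right_of_le_of_le (hpu : p ≤ u) (hut : u ≤ p ⊔ b) : u ⊔ b = p ⊔ b :=
  le_antisymm (sup_le hut le_sup_right) (sup_le_sup_right hpu b)

theorem isSubJoinSemilattice_pentagon (hvp : v ≤ p) (hvb : v ≤ b) (hpu : p ≤ u)
    (hut : u ≤ p ⊔ b) : IsSubJoinSemilattice ({v, p, u, b, p ⊔ b} : Set α) := by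
  refine .of_le_or_le_or_sup_mem ?_
  simp [sup_eq_sup_right_of_le_of_le hpu hut, sup_comm b, hvp, hvb, hpu,
    hut, hvp.trans hpu, (hvp.trans hpu).trans hut]

theorem pentagon_of_le_of_not_le (hvp : v ≤ p) (hvb : v ≤ b) (hpu : p < u) (hut : u ≤ p ⊔ b)
    (hpb : ¬ p ≤ b) (hbu : ¬ b ≤ u) :
    v < p ∧ p < u ∧ u < p ⊔ b ∧ v < b ∧ b < p ⊔ b ∧ (¬ p ≤ b ∧ ¬ b ≤ p) ∧ (¬ u ≤ b ∧ ¬ b ≤ u) ∧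
      IsSubJoinSemilattice ({v, p, u, b, p ⊔ b} : Set α) ∧
      IsM4 ({v, p, u, b, p ⊔ b} : Set α) := by
  have hvp' : v < p := lt_of_le_of_ne hvp fun h => hpb (h ▸ hvb)
  have hvb' : v < b := lt_of_le_of_ne hvb fun h => hbu (h ▸ hvp.trans hpu.le)
  have hut' : u < p ⊔ b := lt_of_le_of_ne hut fun h => hbu (h ▸ le_sup_right)
  have hbt : b < p ⊔ b := lt_of_le_of_ne le_sup_right fun h => hpb (h ▸ le_sup_left)
  have hbp : ¬ b ≤ p := fun h => hbu (h.trans hpu.le)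
  have hub : ¬ u ≤ b := fun h => hpb (hpu.le.trans h)
  exact ⟨hvp', hpu, hut', hvb', hbt, ⟨hpb, hbp⟩, ⟨hub, hbu⟩,
    isSubJoinSemilattice_pentagon hvp hvb hpu.le hut,
    v, p, u, b, p ⊔ b, rfl, hvp', hpu, hut', hvb', hbt, hpb, hbp, hub, hbu, rfl,
    sup_eq_sup_right_of_le_of_le hpu.le hut⟩

end Pentagon

theorem witnesses_v_give_M4 [SemilatticeSup α] (a b c x y v : α)
    (h1 : a < c) (h2 : x ≤ c) (h3 : x ≤ a ⊔ b)
    (h4 : ∀ z, z ≤ b → z ≤ c → z ≤ y) (h5 : a ≤ y) (h6 : ¬ x ≤ y)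
    (hv1 : v ≤ b) (hv2 : v ≤ c) :
    v < a ⊔ v ∧ a ⊔ v < x ⊔ a ⊔ v ∧ x ⊔ a ⊔ v < a ⊔ b ∧
      v < b ∧ b < a ⊔ b ∧
      (¬ a ⊔ v ≤ b ∧ ¬ b ≤ a ⊔ v) ∧ (¬ x ⊔ a ⊔ v ≤ b ∧ ¬ b ≤ x ⊔ a ⊔ v) ∧
      IsSubJoinSemilattice ({v, a ⊔ v, x ⊔ a ⊔ v, b, a ⊔ b} : Set α) ∧
      IsM4 ({v, a ⊔ v, x ⊔ a ⊔ v, b, a ⊔ b} : Set α) := by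
  have hab : ¬ a ≤ b := fun h => h6 (h4 x (h3.trans (sup_le h le_rfl)) h2)
  have hbc : ¬ b ≤ c := fun h => h6 (h3.trans (sup_le h5 (h4 b le_rfl h)))
  have hxav : ¬ x ≤ a ⊔ v := fun h => h6 (h.trans (sup_le h5 (h4 v hv1 hv2)))
  have hpu : a ⊔ v < x ⊔ a ⊔ v := by
    rw [sup_assoc]
    exact right_lt_sup.2 hxav
  have huc : x ⊔ a ⊔ v ≤ c := sup_le (sup_le h2 h1.le) hv2
  have ht : a ⊔ v ⊔ b = a ⊔ b := by
    rw [sup_assoc, sup_eq_right.2 hv1]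
  have hut : x ⊔ a ⊔ v ≤ a ⊔ b := sup_le (sup_le h3 le_sup_left) (hv1.trans le_sup_right)
  rw [← ht] at hut ⊢
  exact pentagon_of_le_of_not_le le_sup_right hv1 hpu hut
    (fun h => hab (le_sup_left.trans h)) (fun h => hbc (h.trans huc))
end

section
/- The four-element join semilattice M_2 (the pentagon with its bottom removed), considered as a join semilattice, fails the o-modular condition. -/
variable {α : Type*}

theorem M2_not_oModular [SemilatticeSup α] (a c b t : α)
    (huniv : (Set.univ : Set α) = {a, c, b, t})
    (h1 : a < c) (h2 : c < t) (h3 : b < t)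
    (h4 : ¬ a ≤ b) (h5 : ¬ b ≤ a) (h6 : ¬ c ≤ b) (h7 : ¬ b ≤ c)
    (h8 : a ⊔ b = t) (h9 : c ⊔ b = t) :
    ¬ OModular α := by
  intro h
  have hc : c ∈ lowerBounds {c, b ⊔ a} := by
    intro x hx
    rcases hx with rfl | hx
    · exact le_refl _
    · simp only [Set.mem_singleton_iff] at hx
      subst hx
      rw [sup_comm, h8]
      exact h2.le
  have key := h c b a h1.le hc
  have ha : a ∈ upperBounds (lowerBounds {c, b} ∪ {a}) := by
    intro x hx
    rcases hx with hx | hx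
    · have hxc : x ≤ c := hx (by left; rfl)
      have hxb : x ≤ b := hx (by right; rfl)
      have hu : x ∈ (Set.univ : Set α) := trivial
      rw [huniv] at hu
      rcases hu with rfl | rfl | rfl | rfl
      · exact le_refl _
      · exact absurd hxb h6
      · exact absurd hxc h7
      · exact absurd (lt_of_lt_of_le h2 hxc) (lt_irrefl _)
    · simp only [Set.mem_singleton_iff] at hx
      subst hx
      exact le_refl _
  exact absurd (key ha) (not_le_of_gt h1)
end
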